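/- Let G be a cofinitary group, r ∈ 2^ω, and (s,E) a condition of Z†_G(r). Then: (1) if n ∉ dom(s), then for all but finitely many m ∈ ℕ the pair (s ∪ {(n,m)}, E) is a condition of Z†_G(r) extending (s,E); (2) if m ∉ ran(s), then for all but finitely many n ∈ ℕ the pair (s ∪ {(n,m)}, E) is a condition of Z†_G(r) extending (s,E). -/

import Mathlib

noncomputable section

/-- Permutations of the natural numbers (elements of `S_∞`). -/
abbrev Perm' := Equiv.Perm ℕ

/-- A letter of a word over `G ∪ {x, x⁻¹}`: either a group element (of `S_∞`),
or `Sum.inr true` standing for `x`, or `Sum.inr false` standing for `x⁻¹`. -/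
abbrev Letter := Perm' ⊕ Bool

/-- A word is a list of letters, written left to right
(the leftmost letter is applied last). -/
abbrev Word := List Letter

/-- A subgroup of `S_∞` is cofinitary if every non-identity element
has only finitely many fixed points. -/
def Cofinitary (G : Subgroup Perm') : Prop :=
  ∀ g ∈ G, g ≠ 1 → {n : ℕ | g n = n}.Finite

/-- A set of pairs is a partial injection (functional and injective). -/
def PartInj (s : Set (ℕ × ℕ)) : Prop :=
  (∀ ⦃a b c⦄, (a, b) ∈ s → (a, c) ∈ s → b = c) ∧
  (∀ ⦃a b c⦄, (a, c) ∈ s → (b, c) ∈ s → a = b)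

/-- Domain of a partial injection given as a set of pairs. -/
def pdom (s : Set (ℕ × ℕ)) : Set ℕ := Prod.fst '' s

/-- Range of a partial injection given as a set of pairs. -/
def pran (s : Set (ℕ × ℕ)) : Set ℕ := Prod.snd '' s

/-- The relation given by substituting the partial injection `s` for `x`
(and `s⁻¹` for `x⁻¹`) in a single letter. -/
def letterRel (s : Set (ℕ × ℕ)) : Letter → ℕ → ℕ → Prop
  | Sum.inl g => fun a b => g a = b
  | Sum.inr true => fun a b => (a, b) ∈ s
  | Sum.inr false => fun a b => (b, a) ∈ s

/-- The relation `w[s]`: evaluation of a word at the partial injection `s`,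
composing the letter relations (rightmost letter applied first). -/
def wordRel (s : Set (ℕ × ℕ)) : Word → ℕ → ℕ → Prop
  | [] => fun a b => a = b
  | l :: w => fun a b => ∃ c, wordRel s w a c ∧ letterRel s l c b

/-- `fix(w[s])`, the set of fixed points of the partial injection `w[s]`. -/
def wordFix (s : Set (ℕ × ℕ)) (w : Word) : Set ℕ := {n | wordRel s w n n}

/-- The word `x^k` for an integer `k` (for `k < 0`, `|k|` copies of `x⁻¹`). -/
def xpow (k : ℤ) : Word :=
  if 0 ≤ k then List.replicate k.toNat (Sum.inr true : Letter)
  else List.replicate (-k).toNat (Sum.inr false : Letter)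

/-- The block `g x^k` as a word. -/
def blockWord (p : Perm' × ℤ) : Word := Sum.inl p.1 :: xpow p.2

/-- `w` is a nice word (member of `W*_G`): `w = x^{k₀}` with `k₀ > 0`, or
`w = g_l x^{k_l} ⋯ g₁ x^{k₁} g₀ x^{k₀}` with `k₀ > 0`, all `k_i ≠ 0` and all
`g_i ∈ G \ {id}`. -/
def IsNice (G : Subgroup Perm') (w : Word) : Prop :=
  (∃ k : ℕ, 0 < k ∧ w = xpow (k : ℤ)) ∨
  (∃ bs : List (Perm' × ℤ), bs ≠ [] ∧
    (∀ p ∈ bs, p.1 ∈ G ∧ p.1 ≠ 1 ∧ p.2 ≠ 0) ∧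
    (∃ p, bs.getLast? = some p ∧ 0 < p.2) ∧
    w = (bs.map blockWord).flatten)

/-- The number of occurrences of `x` or `x⁻¹` in a word. -/
def xOccurrences (w : Word) : ℕ := w.countP (fun l => l.isRight)

/-- `w ∈ W¹_G`: a nice word with exactly one occurrence of `x` or `x⁻¹`. -/
def IsNiceOne (G : Subgroup Perm') (w : Word) : Prop :=
  IsNice G w ∧ xOccurrences w = 1

/-- `(s, E)` is a condition of Zhang's forcing `Z_G`: `s` is a finite partial
injection and `E` a finite set of nice words. -/
def ZCond (G : Subgroup Perm') (s : Set (ℕ × ℕ)) (E : Set Word) : Prop :=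
  s.Finite ∧ PartInj s ∧ E.Finite ∧ ∀ w ∈ E, IsNice G w

/-- `(t, F) ≤ (s, E)` in Zhang's forcing: `s ⊆ t`, `E ⊆ F`, and
`fix(w[t]) = fix(w[s])` for every `w ∈ E`. -/
def ZLe (t : Set (ℕ × ℕ)) (F : Set Word) (s : Set (ℕ × ℕ)) (E : Set Word) : Prop :=
  s ⊆ t ∧ E ⊆ F ∧ ∀ w ∈ E, wordFix t w = wordFix s w

/-- An injective tree: a nonempty set of finite sequences closed under initial
segments, all of whose elements are injective sequences. -/
def IsInjTree (T : Set (List ℕ)) : Prop :=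
  T.Nonempty ∧ (∀ t ∈ T, ∀ s : List ℕ, s <+: t → s ∈ T) ∧ ∀ t ∈ T, t.Nodup

/-- `T ∈ I_i(P)⁺`: an injective tree such that for every `s ∈ T` and every
finite `P₀ ⊆ P` there are `t ∈ T` extending `s` and `k ∈ dom(t) \ dom(s)` with
`t(k) ≠ f(k)` for all `f ∈ P₀`. -/
def TreePos (P : Set Perm') (T : Set (List ℕ)) : Prop :=
  IsInjTree T ∧
  ∀ s ∈ T, ∀ P₀ ⊆ P, P₀.Finite →
    ∃ t ∈ T, s <+: t ∧ ∃ k, s.length ≤ k ∧ k < t.length ∧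
      ∀ f ∈ P₀, t.getD k 0 ≠ f k

/-- A set `O` is closed under a relation `R` and its inverse. -/
def RelClosed (R : ℕ → ℕ → Prop) (O : Set ℕ) : Prop :=
  ∀ a b, R a b → (a ∈ O ↔ b ∈ O)

/-- The orbit of `n` under the (partial injective) relation `R`: the smallest
set containing `n` closed under applications of `R` and `R⁻¹`. -/
def relOrbit (R : ℕ → ℕ → Prop) (n : ℕ) : Set ℕ :=
  ⋂₀ {O : Set ℕ | n ∈ O ∧ RelClosed R O}

/-- The set of all orbits of the relation `R`. -/
def relOrbits (R : ℕ → ℕ → Prop) : Set (Set ℕ) := {O | ∃ n, O = relOrbit R n}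

/-- Domain of a relation. -/
def relDom (R : ℕ → ℕ → Prop) : Set ℕ := {a | ∃ b, R a b}

/-- Range of a relation. -/
def relRan (R : ℕ → ℕ → Prop) : Set ℕ := {b | ∃ a, R a b}

/-- The set of closed orbits of `R`: those orbits contained in `dom ∩ ran`. -/
def relClosedOrbits (R : ℕ → ℕ → Prop) : Set (Set ℕ) :=
  {O ∈ relOrbits R | O ⊆ relDom R ∩ relRan R}

/-- The relation of a partial injection given as a set of pairs. -/
def sRel (s : Set (ℕ × ℕ)) : ℕ → ℕ → Prop := fun a b => (a, b) ∈ s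

/-- The relation (graph) of a permutation of `ℕ`. -/
def permRel (f : Perm') : ℕ → ℕ → Prop := fun a b => f a = b

/-- A partial injection `s` is nice: every closed orbit has its minimum below
the minimum of the complement of the union of all closed orbits. -/
def NiceInj (s : Set (ℕ × ℕ)) : Prop :=
  ∀ O ∈ relClosedOrbits (sRel s),
    sInf O < sInf {n : ℕ | n ∉ ⋃₀ relClosedOrbits (sRel s)}

/-- The position of a closed orbit `O` of `s` in the well-order of closed
orbits by their minima. -/
def orbitIndex (s : Set (ℕ × ℕ)) (O : Set ℕ) : ℕ :=
  {P ∈ relClosedOrbits (sRel s) | sInf P < sInf O}.ncard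

/-- `s` codes `r`, i.e. `o_s ⊆ r`: the `n`-th closed orbit (in the well-order
by minima) has cardinality congruent to `r(n)` mod 2. -/
def CodesReal (s : Set (ℕ × ℕ)) (r : ℕ → Fin 2) : Prop :=
  ∀ O ∈ relClosedOrbits (sRel s), O.ncard % 2 = (r (orbitIndex s O) : ℕ)

/-- `(s, E)` is a condition of `Z_G(r)`. -/
def ZrCond (G : Subgroup Perm') (r : ℕ → Fin 2)
    (s : Set (ℕ × ℕ)) (E : Set Word) : Prop :=
  ZCond G s E ∧ NiceInj s ∧ CodesReal s r

/-- The `n`-th prime. -/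
def pPrime (n : ℕ) : ℕ := Nat.nth Nat.Prime n

/-- The orbit-coding function `o†`: `o†(n)` is the number of closed orbits of
`R` of cardinality `p_n`, modulo 2. -/
def odag (R : ℕ → ℕ → Prop) (n : ℕ) : ℕ :=
  {O ∈ relClosedOrbits R | O.ncard = pPrime n}.ncard % 2

/-- `v^k`: the word `v` concatenated `k` times. -/
def wpow (v : Word) (k : ℕ) : Word := (List.replicate k v).flatten

/-- `w ∈ W†_G`: a nice word that is indecomposable, i.e. not of the form `v^k`
for a nice word `v` and `k > 1`. -/
def Indecomposable (G : Subgroup Perm') (w : Word) : Prop :=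
  IsNice G w ∧ ¬∃ v : Word, IsNice G v ∧ ∃ k : ℕ, 1 < k ∧ w = wpow v k

/-- The inverse of a letter. -/
def letterInv : Letter → Letter
  | Sum.inl g => Sum.inl g⁻¹
  | Sum.inr b => Sum.inr (!b)

/-- The inverse of a word. -/
def wordInv (w : Word) : Word := (w.map letterInv).reverse

/-- `E` is closed under cyclic permutations and inverses thereof within `W*_G`. -/
def CyclClosed (G : Subgroup Perm') (E : Set Word) : Prop :=
  ∀ w ∈ E, ∀ w₀ w₁ : Word, w = w₀ ++ w₁ →
    (IsNice G (w₁ ++ w₀) → w₁ ++ w₀ ∈ E) ∧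
    (IsNice G (wordInv (w₁ ++ w₀)) → wordInv (w₁ ++ w₀) ∈ E)

/-- `(s, E)` is a condition of `Z†_G(r)`: a Zhang condition such that `E` is
closed under cyclic permutations and inverses thereof in `W*_G`, and whenever
`w = v^k ∈ E` with `v ∈ W†_G` then `v^l ∈ E` for all `0 < l ≤ k` and `o†_{v[s]}`
codes `r` up to `n` for every `n` with `p_n ≤ k`. -/
def ZdagCond (G : Subgroup Perm') (r : ℕ → Fin 2)
    (s : Set (ℕ × ℕ)) (E : Set Word) : Prop :=
  ZCond G s E ∧ CyclClosed G E ∧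
  ∀ w ∈ E, ∀ v : Word, ∀ k : ℕ, Indecomposable G v → w = wpow v k →
    (∀ l : ℕ, 0 < l → l ≤ k → wpow v l ∈ E) ∧
    (∀ n : ℕ, pPrime n ≤ k → ∀ i ≤ n, odag (wordRel s v) i = (r i : ℕ))

/-- Substituting the permutation `f` for `x` in a letter. -/
def letterPerm (f : Perm') : Letter → Perm'
  | Sum.inl g => g
  | Sum.inr true => f
  | Sum.inr false => f⁻¹

/-- `w[f]`: evaluation of a word at the permutation `f`. -/
def wordPerm (f : Perm') (w : Word) : Perm' := (w.map (letterPerm f)).prod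

/-- Two functions are eventually different. -/
def EvDiff (f g : ℕ → ℕ) : Prop := {k : ℕ | f k = g k}.Finite

/-- A set of permutations is an eventually different family. -/
def EDFamily (P : Set Perm') : Prop :=
  ∀ f ∈ P, ∀ g ∈ P, f ≠ g → EvDiff f g


/-!
Let `GS` be the group letters occurring in `E`; each has finitely many fixed points because `G` is
cofinitary. Suppose the new point `m` (for the range extension: `n`) lies outside
`dom s ∪ ran s ∪ {n}`, is moved by every `g ∈ GS`, and `g^{±1} m ∉ dom s ∪ ran s ∪ {n}`; all but
finitely many `m` qualify. Then no fixed point of `w[s ∪ {(n, m)}]`, for `w` nice, can have its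
computation pass through `m`: rotating `w` so that the computation starts at `m`, the rotated word
is still cyclically reduced, and it would have to enter or leave `m` by a group letter, landing where
no `x^{±1}` is defined, or enter and leave by `x^{±1}`, which forces the pattern `x⁻¹ x`. Hence
`fix(w[s ∪ {(n, m)}]) = fix(w[s])` for all `w ∈ E`. Finally, the closed orbits of size `p` of a
partial injection `v[t]` are cycles of length `p`, made of fixed points of `v^p[t]`; since
`v^p ∈ E`, they are the same for `t = s` and `t = s ∪ {(n, m)}`, and `o†` is unchanged.
-/

section Words

variable {s t : Set (ℕ × ℕ)}

lemma wordRel_append {w₂ w₁ : Word} {a b : ℕ} :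
    wordRel s (w₂ ++ w₁) a b ↔ ∃ c, wordRel s w₁ a c ∧ wordRel s w₂ c b := by
  induction w₂ generalizing b with
  | nil => simp [wordRel]
  | cons l w ih =>
    simp only [List.cons_append, wordRel, ih]
    constructor
    · rintro ⟨c, ⟨d, hd, hw⟩, hl⟩
      exact ⟨d, hd, c, hw, hl⟩
    · rintro ⟨d, hd, c, hw, hl⟩
      exact ⟨c, ⟨d, hd, hw⟩, hl⟩

lemma wordRel_singleton {l : Letter} {a b : ℕ} : wordRel s [l] a b ↔ letterRel s l a b := by
  simp [wordRel]

lemma letterRel_mono (h : s ⊆ t) {l : Letter} {a b : ℕ} :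
    letterRel s l a b → letterRel t l a b := by
  rcases l with g | (_ | _)
  exacts [id, fun hab => h hab, fun hab => h hab]

lemma wordRel_mono (h : s ⊆ t) {w : Word} {a b : ℕ} : wordRel s w a b → wordRel t w a b := by
  induction w generalizing b with
  | nil => exact id
  | cons l w ih => exact fun ⟨c, hc, hl⟩ => ⟨c, ih hc, letterRel_mono h hl⟩

lemma letterRel_biUnique (hs : PartInj s) (l : Letter) : Relator.BiUnique (letterRel s l) := by
  rcases l with g | (_ | _)
  · exact ⟨fun a b c ha hb => g.injective (ha.trans hb.symm), fun a b c hb hc => hb ▸ hc⟩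
  · exact ⟨fun a b c ha hb => hs.1 ha hb, fun a b c hb hc => hs.2 hb hc⟩
  · exact ⟨fun a b c ha hb => hs.2 ha hb, fun a b c hb hc => hs.1 hb hc⟩

lemma wordRel_biUnique (hs : PartInj s) (w : Word) : Relator.BiUnique (wordRel s w) := by
  induction w with
  | nil => exact ⟨fun a b c ha hb => ha.trans hb.symm, fun a b c hb hc => hb.symm.trans hc⟩
  | cons l w ih =>
    refine ⟨?_, ?_⟩
    · rintro a b c ⟨d, hd, hl⟩ ⟨e, he, hl'⟩
      obtain rfl := (letterRel_biUnique hs l).1 hl hl'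
      exact ih.1 hd he
    · rintro a b c ⟨d, hd, hl⟩ ⟨e, he, hl'⟩
      obtain rfl := ih.2 hd he
      exact (letterRel_biUnique hs l).2 hl hl'

end Words

section NiceWords

def ReducedPair : Letter → Letter → Prop
  | Sum.inl _, Sum.inl _ => False
  | Sum.inr x, Sum.inr y => x = y
  | _, _ => True

def CyclicallyReduced (w : Word) : Prop := Cycle.Chain ReducedPair (w : Cycle Letter)

lemma CyclicallyReduced.rotate {w₁ w₂ : Word} (h : CyclicallyReduced (w₂ ++ w₁)) :
    CyclicallyReduced (w₁ ++ w₂) := by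
  rwa [CyclicallyReduced, Cycle.coe_eq_coe.2 List.isRotated_append]

lemma xpow_eq_replicate (k : ℤ) :
    xpow k = List.replicate k.natAbs (Sum.inr (decide (0 ≤ k))) := by
  unfold xpow
  split_ifs with h
  · simp only [h, decide_true]; congr 1; omega
  · simp only [h, decide_false]; congr 1; omega

lemma isChain_blockWord (p : Perm' × ℤ) : List.IsChain ReducedPair (blockWord p) := by
  rw [blockWord, xpow_eq_replicate]
  cases p.2.natAbs with
  | zero => exact List.isChain_singleton _
  | succ j =>
    rw [List.replicate_succ, List.isChain_cons_cons, ← List.replicate_succ]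
    exact ⟨trivial, List.isChain_replicate_of_rel (r := ReducedPair) _ rfl⟩

lemma blockWord_eq_concat {p : Perm' × ℤ} (hp : p.2 ≠ 0) :
    ∃ l x, blockWord p = l ++ [Sum.inr x] := by
  obtain ⟨j, hj⟩ := Nat.exists_eq_succ_of_ne_zero (Int.natAbs_ne_zero.2 hp)
  exact ⟨_, _, by rw [blockWord, xpow_eq_replicate, hj, List.replicate_succ', List.cons_append]⟩

lemma isChain_flatten_blockWord_append {bs : List (Perm' × ℤ)} (hbs : ∀ p ∈ bs, p.2 ≠ 0)
    (h : Perm') : List.IsChain ReducedPair ((bs.map blockWord).flatten ++ [Sum.inl h]) := by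
  induction bs with
  | nil => simp
  | cons p bs ih =>
    obtain ⟨h', L, hL⟩ :
        ∃ h' L, (bs.map blockWord).flatten ++ [Sum.inl h] = Sum.inl h' :: L := by
      cases bs with
      | nil => exact ⟨h, [], rfl⟩
      | cons q _ => exact ⟨q.1, _, by simp [blockWord]; rfl⟩
    obtain ⟨l, x, hlast⟩ := blockWord_eq_concat (hbs p List.mem_cons_self)
    have hrest := ih fun q hq => hbs q (List.mem_cons_of_mem _ hq)
    rw [hL] at hrest
    rw [List.map_cons, List.flatten_cons, List.append_assoc, hL, hlast, List.append_assoc,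
      List.singleton_append, List.isChain_append_cons_cons, ← hlast]
    exact ⟨isChain_blockWord p, trivial, hrest⟩

variable {G : Subgroup Perm'} {w : Word}

lemma IsNice.ne_nil (hw : IsNice G w) : w ≠ [] := by
  rcases hw with ⟨k, hk, rfl⟩ | ⟨bs, hbs, -, -, rfl⟩
  · simp [xpow_eq_replicate]; omega
  · obtain ⟨p, bs, rfl⟩ := List.exists_cons_of_ne_nil hbs
    simp [blockWord]

lemma IsNice.cyclicallyReduced (hw : IsNice G w) : CyclicallyReduced w := by
  rcases hw with ⟨k, -, rfl⟩ | ⟨bs, hbs, hmem, -, rfl⟩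
  · refine Cycle.chain_of_pairwise fun a ha b hb => ?_
    simp only [Cycle.mem_coe_iff, xpow_eq_replicate, List.mem_replicate] at ha hb
    rw [ha.2, hb.2]
    rfl
  · obtain ⟨p, bs, rfl⟩ := List.exists_cons_of_ne_nil hbs
    have := isChain_flatten_blockWord_append (fun q hq => (hmem q hq).2.2) p.1
    simp only [List.map_cons, List.flatten_cons, blockWord, List.cons_append] at this ⊢
    rwa [CyclicallyReduced, Cycle.chain_coe_cons]

lemma IsNice.mem_of_inl_mem (hw : IsNice G w) {g : Perm'} (hg : Sum.inl g ∈ w) :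
    g ∈ G ∧ g ≠ 1 := by
  rcases hw with ⟨k, -, rfl⟩ | ⟨bs, -, hmem, -, rfl⟩
  · simp [xpow_eq_replicate] at hg
  · simp only [List.mem_flatten, List.mem_map] at hg
    obtain ⟨_, ⟨p, hp, rfl⟩, hg⟩ := hg
    simp only [blockWord, List.mem_cons, Sum.inl.injEq, xpow_eq_replicate, List.mem_replicate,
      reduceCtorEq, and_false, or_false] at hg
    exact hg ▸ ⟨(hmem p hp).1, (hmem p hp).2.1⟩

end NiceWords

section Isolation

variable {s t : Set (ℕ × ℕ)}

def psupp (s : Set (ℕ × ℕ)) : Set ℕ := pdom s ∪ pran s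

lemma letterRel_inr_mem_psupp {x : Bool} {a b : ℕ} (h : letterRel t (Sum.inr x) a b) :
    a ∈ psupp t ∧ b ∈ psupp t := by
  cases x
  · exact ⟨Or.inr ⟨_, h, rfl⟩, Or.inl ⟨_, h, rfl⟩⟩
  · exact ⟨Or.inl ⟨_, h, rfl⟩, Or.inr ⟨_, h, rfl⟩⟩

lemma not_mem_wordFix_of_isolated {u : Word} {p : ℕ} (hu : CyclicallyReduced u) (hne : u ≠ [])
    (hp : p ∉ pdom t ∩ pran t)
    (hg : ∀ g, Sum.inl g ∈ u → g p ∉ psupp t ∧ g⁻¹ p ∉ psupp t) :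
    p ∉ wordFix t u := by
  intro hfix
  obtain ⟨a, v, rfl⟩ := List.exists_cons_of_ne_nil hne
  have hadj : ∀ x y, [x, y] <:+: a :: v ++ [a] → ReducedPair x y := fun x y hxy =>
    List.isChain_pair.1 (((Cycle.chain_coe_cons _ _ _).1 hu).infix hxy)
  obtain ⟨v₀, b, hb⟩ : ∃ v₀ b, a :: v = v₀ ++ [b] :=
    (List.eq_nil_or_concat' _).resolve_left (List.cons_ne_nil _ _)
  obtain ⟨c, hvc, hac⟩ := id hfix
  obtain ⟨d, hbd, hv₀⟩ : ∃ d, letterRel t b p d ∧ wordRel t v₀ d p := by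
    have hfix' : wordRel t (v₀ ++ [b]) p p := hb ▸ hfix
    simpa only [wordRel_append, wordRel_singleton] using hfix'
  -- `a` is the letter entering `p` (applied last), `b` the letter leaving it (applied first)
  rcases a with g | x
  · rcases v with _ | ⟨a', v'⟩
    · exact hadj _ _ ⟨[], [], rfl⟩
    obtain ⟨e, -, hae⟩ := hvc
    rcases a' with g' | x'
    · exact hadj _ _ ⟨[], v' ++ [Sum.inl g], rfl⟩
    · have hc : c = g⁻¹ p := Equiv.Perm.eq_inv_iff_eq.2 hac
      exact (hg g List.mem_cons_self).2 (hc ▸ (letterRel_inr_mem_psupp hae).2)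
  rcases b with g | y
  · rcases List.eq_nil_or_concat' v₀ with rfl | ⟨v₁, b', rfl⟩
    · simp at hb
    have hgu : Sum.inl g ∈ Sum.inr x :: v := by simp [hb]
    obtain ⟨e, hbe, -⟩ := wordRel_append.1 hv₀
    rcases b' with g' | y'
    · exact hadj (Sum.inl g') (Sum.inl g) ⟨v₁, [Sum.inr x], by rw [hb]; simp⟩
    · have hd : d = g p := hbd.symm
      exact (hg g hgu).1 (hd ▸ (letterRel_inr_mem_psupp (wordRel_singleton.1 hbe)).1)
  obtain rfl : y = x := hadj (Sum.inr y) (Sum.inr x) ⟨v₀, [], by rw [hb]; simp⟩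
  cases y
  · exact hp ⟨⟨_, hac, rfl⟩, ⟨_, hbd, rfl⟩⟩
  · exact hp ⟨⟨_, hbd, rfl⟩, ⟨_, hac, rfl⟩⟩

lemma letterRel_insert {n m a b : ℕ} {l : Letter} (h : letterRel (insert (n, m) s) l a b) :
    letterRel s l a b ∨ (a = n ∧ b = m ∨ a = m ∧ b = n) := by
  rcases l with g | (_ | _)
  · exact Or.inl h
  all_goals
    simp only [letterRel, Set.mem_insert_iff, Prod.mk.injEq] at h ⊢
    tauto

lemma wordRel_insert {n m p : ℕ} (hp : p = n ∨ p = m) {w : Word} {a b : ℕ}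
    (h : wordRel (insert (n, m) s) w a b) :
    wordRel s w a b ∨ ∃ w₁ w₂, w = w₂ ++ w₁ ∧
      wordRel (insert (n, m) s) w₁ a p ∧ wordRel (insert (n, m) s) w₂ p b := by
  induction w generalizing b with
  | nil => exact Or.inl h
  | cons l w ih =>
    obtain ⟨c, hc, hl⟩ := h
    rcases ih hc with hc | ⟨w₁, w₂, rfl, h₁, h₂⟩
    · rcases letterRel_insert hl with hl | hcb
      · exact Or.inl ⟨c, hc, hl⟩
      have hc' := wordRel_mono (Set.subset_insert (n, m) s) hc
      obtain rfl | rfl : p = c ∨ p = b := by omega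
      · exact Or.inr ⟨w, [l], rfl, hc', wordRel_singleton.2 hl⟩
      · exact Or.inr ⟨l :: w, [], rfl, ⟨c, hc', hl⟩, rfl⟩
    · exact Or.inr ⟨w₁, l :: w₂, rfl, h₁, c, h₂, hl⟩

lemma wordFix_insert_eq_of_forall_rotate {n m p : ℕ} (hp : p = n ∨ p = m) {w : Word}
    (hrot : ∀ w₁ w₂, w = w₂ ++ w₁ → p ∉ wordFix (insert (n, m) s) (w₁ ++ w₂)) :
    wordFix (insert (n, m) s) w = wordFix s w := by
  refine Set.Subset.antisymm (fun a ha => ?_) fun a => wordRel_mono (Set.subset_insert _ _)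
  rcases wordRel_insert hp ha with ha | ⟨w₁, w₂, rfl, h₁, h₂⟩
  · exact ha
  · exact (hrot w₁ w₂ rfl (wordRel_append.2 ⟨a, h₂, h₁⟩)).elim

lemma IsNice.wordFix_insert_eq {G : Subgroup Perm'} {w : Word} (hw : IsNice G w) {n m p : ℕ}
    (hp : p = n ∨ p = m) (hpt : p ∉ pdom (insert (n, m) s) ∩ pran (insert (n, m) s))
    (hg : ∀ g, Sum.inl g ∈ w →
      g p ∉ psupp (insert (n, m) s) ∧ g⁻¹ p ∉ psupp (insert (n, m) s)) :
    wordFix (insert (n, m) s) w = wordFix s w := by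
  refine wordFix_insert_eq_of_forall_rotate hp fun w₁ w₂ hw₁₂ => ?_
  subst hw₁₂
  refine not_mem_wordFix_of_isolated hw.cyclicallyReduced.rotate ?_ hpt fun g hg' => hg g ?_
  · rw [Ne, List.append_eq_nil_iff, and_comm, ← List.append_eq_nil_iff]
    exact hw.ne_nil
  · simpa [or_comm] using hg'

end Isolation

lemma Set.Finite.mem_periodicPts_of_mapsTo {α : Type*} {O : Set α} {f : α → α} (hO : O.Finite)
    (hmaps : Set.MapsTo f O O) (hinj : Set.InjOn f O) {x : α} (hx : x ∈ O) :
    x ∈ Function.periodicPts f := by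
  obtain ⟨i, j, hij, h⟩ := hO.exists_lt_map_eq_of_forall_mem (f := fun n => f^[n] x)
    fun n => hmaps.iterate n hx
  refine Function.mk_mem_periodicPts (Nat.sub_pos_of_lt hij)
    (hinj.iterate hmaps i (hmaps.iterate _ hx) hx ?_)
  rw [← Function.iterate_add_apply, Nat.add_sub_cancel' hij.le]
  exact h.symm

lemma Function.ncard_range_iterate_of_mem_periodicPts {α : Type*} {f : α → α} {x : α}
    (hx : x ∈ Function.periodicPts f) :
    (Set.range fun n => f^[n] x).ncard = Function.minimalPeriod f x := by
  have hrange : (Set.range fun n => f^[n] x) =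
      (fun n => f^[n] x) '' Set.Iio (Function.minimalPeriod f x) := by
    refine Set.Subset.antisymm ?_ (Set.image_subset_range _ _)
    rintro _ ⟨n, rfl⟩
    exact ⟨n % Function.minimalPeriod f x,
      Nat.mod_lt _ (Function.minimalPeriod_pos_of_mem_periodicPts hx),
      Function.iterate_mod_minimalPeriod_eq⟩
  rw [hrange, Function.iterate_injOn_Iio_minimalPeriod.ncard_image, Set.ncard_Iio_nat]

section Orbits

variable {R R' : ℕ → ℕ → Prop}

def relPow (R : ℕ → ℕ → Prop) : ℕ → ℕ → ℕ → Prop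
  | 0 => Eq
  | p + 1 => fun a b => ∃ c, R a c ∧ relPow R p c b

lemma wordRel_wpow {s : Set (ℕ × ℕ)} {v : Word} {p a b : ℕ} :
    wordRel s (wpow v p) a b ↔ relPow (wordRel s v) p a b := by
  induction p generalizing a with
  | zero => simp [wpow, wordRel, relPow]
  | succ p ih =>
    rw [wpow, List.replicate_succ', List.flatten_append, List.flatten_singleton, ← wpow,
      wordRel_append]
    simp only [relPow, ih]

lemma relPow_iterate {O : Set ℕ} {f : ℕ → ℕ} (hf : ∀ b ∈ O, R b (f b))
    (hmaps : Set.MapsTo f O O) (n : ℕ) : ∀ a ∈ O, relPow R n a (f^[n] a) := by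
  induction n with
  | zero => exact fun a _ => rfl
  | succ n ih => exact fun a ha => ⟨f a, hf a ha, ih (f a) (hmaps ha)⟩

lemma mem_relOrbit_self (R : ℕ → ℕ → Prop) (a : ℕ) : a ∈ relOrbit R a :=
  Set.mem_sInter.2 fun _ hO => hO.1

lemma relOrbit_relClosed (R : ℕ → ℕ → Prop) (a : ℕ) : RelClosed R (relOrbit R a) :=
  fun b c hbc => by
    simp only [relOrbit, Set.mem_sInter]
    exact forall₂_congr fun O hO => hO.2 b c hbc

lemma relOrbit_subset {a : ℕ} {O : Set ℕ} (ha : a ∈ O) (hO : RelClosed R O) :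
    relOrbit R a ⊆ O :=
  Set.sInter_subset_of_mem ⟨ha, hO⟩

lemma mem_relClosedOrbits_of_agree {O : Set ℕ} (hO : O ∈ relClosedOrbits R)
    (hRR' : ∀ a b, a ∈ O ∨ b ∈ O → (R a b ↔ R' a b)) : O ∈ relClosedOrbits R' := by
  obtain ⟨⟨a₀, rfl⟩, hdr⟩ := hO
  have hcl : RelClosed R' (relOrbit R a₀) := fun b c hbc => by
    by_cases h : b ∈ relOrbit R a₀ ∨ c ∈ relOrbit R a₀
    · exact relOrbit_relClosed R a₀ b c ((hRR' b c h).2 hbc)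
    · exact iff_of_false (fun hb => h (Or.inl hb)) fun hc => h (Or.inr hc)
  have hsub : relOrbit R' a₀ ⊆ relOrbit R a₀ := relOrbit_subset (mem_relOrbit_self R a₀) hcl
  have hcl' : RelClosed R (relOrbit R' a₀) := fun b c hbc => by
    by_cases h : b ∈ relOrbit R a₀ ∨ c ∈ relOrbit R a₀
    · exact relOrbit_relClosed R' a₀ b c ((hRR' b c h).1 hbc)
    · exact iff_of_false (fun hb => h (Or.inl (hsub hb))) fun hc => h (Or.inr (hsub hc))
  refine ⟨⟨a₀, (hsub.antisymm (relOrbit_subset (mem_relOrbit_self R' a₀) hcl')).symm⟩,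
    fun b hb => ⟨?_, ?_⟩⟩
  · obtain ⟨c, hc⟩ := (hdr hb).1
    exact ⟨c, (hRR' b c (Or.inl hb)).1 hc⟩
  · obtain ⟨c, hc⟩ := (hdr hb).2
    exact ⟨c, (hRR' c b (Or.inr hb)).1 hc⟩

lemma relOrbit_eq_range_iterate (hR : Relator.BiUnique R) {a₀ : ℕ} {f : ℕ → ℕ}
    (hf : ∀ b ∈ relOrbit R a₀, R b (f b)) (hper : a₀ ∈ Function.periodicPts f) :
    relOrbit R a₀ = Set.range fun n => f^[n] a₀ := by
  have ha₀ := mem_relOrbit_self R a₀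
  have hmaps : Set.MapsTo f (relOrbit R a₀) (relOrbit R a₀) := fun b hb =>
    (relOrbit_relClosed R a₀ b _ (hf b hb)).1 hb
  refine (relOrbit_subset (O := Set.range fun n => f^[n] a₀) ⟨0, rfl⟩
    fun b c hbc => Iff.intro ?_ ?_).antisymm ?_
  · rintro ⟨j, rfl⟩
    dsimp only at hbc
    exact ⟨j + 1, by
      dsimp only
      rw [Function.iterate_succ_apply', hR.2 hbc (hf _ (hmaps.iterate j ha₀))]⟩
  · rintro ⟨j, rfl⟩
    dsimp only at hbc ⊢
    have hb : b ∈ relOrbit R a₀ := (relOrbit_relClosed R a₀ b _ hbc).2 (hmaps.iterate j ha₀)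
    -- going once around the cycle, the predecessor of `f^[j] a₀` is `f^[j + period - 1] a₀`
    refine ⟨j + Function.minimalPeriod f a₀ - 1,
      hR.1 (hf _ (hmaps.iterate _ ha₀)) ?_⟩
    rw [← Function.iterate_succ_apply' f, Nat.succ_eq_add_one,
      Nat.sub_add_cancel (by have := Function.minimalPeriod_pos_of_mem_periodicPts hper; omega),
      Function.iterate_add_minimalPeriod_eq]
    exact hbc
  · rintro _ ⟨j, rfl⟩
    exact hmaps.iterate j ha₀

lemma relPow_ncard_of_mem_relClosedOrbits (hR : Relator.BiUnique R) {O : Set ℕ}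
    (hO : O ∈ relClosedOrbits R) : ∀ a ∈ O, relPow R O.ncard a a := by
  classical
  obtain ⟨⟨a₀, rfl⟩, hdr⟩ := hO
  -- an infinite orbit has `ncard = 0`
  rcases Nat.eq_zero_or_pos (relOrbit R a₀).ncard with h0 | hpos
  · exact fun a _ => h0 ▸ rfl
  let f : ℕ → ℕ := fun b => if h : ∃ c, R b c then h.choose else b
  have hf : ∀ b ∈ relOrbit R a₀, R b (f b) := fun b hb => by
    dsimp only [f]
    rw [dif_pos (show ∃ c, R b c from (hdr hb).1)]
    exact (hdr hb).1.choose_spec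
  have hmaps : Set.MapsTo f (relOrbit R a₀) (relOrbit R a₀) := fun b hb =>
    (relOrbit_relClosed R a₀ b _ (hf b hb)).1 hb
  have hper := Set.Finite.mem_periodicPts_of_mapsTo (Set.finite_of_ncard_pos hpos) hmaps
    (fun b hb c hc h => hR.1 (hf b hb) (h ▸ hf c hc)) (mem_relOrbit_self R a₀)
  rw [relOrbit_eq_range_iterate hR hf hper, Function.ncard_range_iterate_of_mem_periodicPts hper]
  rintro _ ⟨j, rfl⟩
  have := relPow_iterate hf hmaps (Function.minimalPeriod f a₀) _
    (hmaps.iterate j (mem_relOrbit_self R a₀))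
  rwa [((Function.isPeriodicPt_minimalPeriod f a₀).apply_iterate j).eq] at this

lemma closedOrbits_ncard_eq (hle : ∀ a b, R a b → R' a b) (hR' : Relator.BiUnique R')
    {p : ℕ} (hp : 0 < p) (hfix : ∀ a, relPow R' p a a → relPow R p a a) :
    {O ∈ relClosedOrbits R' | O.ncard = p} = {O ∈ relClosedOrbits R | O.ncard = p} := by
  ext O
  refine ⟨fun ⟨hO, hcard⟩ => ⟨mem_relClosedOrbits_of_agree hO fun a b hab => ?_, hcard⟩,
    fun ⟨hO, hcard⟩ => ⟨mem_relClosedOrbits_of_agree hO fun a b hab => ?_, hcard⟩⟩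
  · refine ⟨fun h => ?_, hle a b⟩
    have ha : a ∈ O := by
      obtain ⟨⟨n, rfl⟩, -⟩ := hO
      exact hab.elim id (relOrbit_relClosed R' n a b h).2
    obtain ⟨q, rfl⟩ := Nat.exists_eq_add_one_of_ne_zero hp.ne'
    obtain ⟨c, hac, -⟩ := hfix a (hcard ▸ relPow_ncard_of_mem_relClosedOrbits hR' hO a ha)
    rwa [hR'.2 h (hle a c hac)]
  · refine ⟨hle a b, fun h => ?_⟩
    rcases hab with ha | hb
    · obtain ⟨c, hac⟩ := (hO.2 ha).1
      rwa [hR'.2 h (hle a c hac)]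
    · obtain ⟨c, hcb⟩ := (hO.2 hb).2
      rwa [hR'.1 h (hle c b hcb)]

end Orbits

lemma odag_eq_of_wordFix_wpow {s t : Set (ℕ × ℕ)} (hst : s ⊆ t) (ht : PartInj t) {v : Word}
    {i : ℕ} (hfix : wordFix t (wpow v (pPrime i)) = wordFix s (wpow v (pPrime i))) :
    odag (wordRel t v) i = odag (wordRel s v) i := by
  unfold odag
  rw [closedOrbits_ncard_eq (R := wordRel s v) (fun a b => wordRel_mono hst)
    (wordRel_biUnique ht v) (p := pPrime i) (Nat.prime_nth_prime i).pos fun a ha => ?_]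
  have ha' : a ∈ wordFix t (wpow v (pPrime i)) := wordRel_wpow.2 ha
  rw [hfix] at ha'
  exact wordRel_wpow.1 ha'

lemma ZdagCond.extend_of_wordFix_eq {G : Subgroup Perm'} {r : ℕ → Fin 2}
    {s t : Set (ℕ × ℕ)} {E : Set Word} (hc : ZdagCond G r s E) (hst : s ⊆ t)
    (htfin : t.Finite) (ht : PartInj t) (hfix : ∀ w ∈ E, wordFix t w = wordFix s w) :
    ZdagCond G r t E ∧ ZLe t E s E := by
  obtain ⟨⟨-, -, hEfin, hEnice⟩, hcyc, hdag⟩ := hc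
  refine ⟨⟨⟨htfin, ht, hEfin, hEnice⟩, hcyc, fun w hw v k hv hwv =>
    ⟨(hdag w hw v k hv hwv).1, fun n hn i hi => ?_⟩⟩, hst, subset_rfl, hfix⟩
  have hik : pPrime i ≤ k := (Nat.nth_monotone Nat.infinite_setOfPred_prime hi).trans hn
  rw [odag_eq_of_wordFix_wpow hst ht
    (hfix _ ((hdag w hw v k hv hwv).1 _ (Nat.prime_nth_prime i).pos hik))]
  exact (hdag w hw v k hv hwv).2 n hn i hi

lemma PartInj.insert {s : Set (ℕ × ℕ)} (hs : PartInj s) {a b : ℕ} (ha : a ∉ pdom s)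
    (hb : b ∉ pran s) : PartInj (insert (a, b) s) := by
  have ha' : ∀ c, (a, c) ∉ s := fun c h => ha ⟨_, h, rfl⟩
  have hb' : ∀ c, (c, b) ∉ s := fun c h => hb ⟨_, h, rfl⟩
  refine ⟨fun x y z hxy hxz => ?_, fun x y z hxz hyz => ?_⟩
  · simp only [Set.mem_insert_iff, Prod.mk.injEq] at hxy hxz
    rcases hxy with ⟨rfl, rfl⟩ | hxy <;> rcases hxz with ⟨h, rfl⟩ | hxz
    exacts [rfl, (ha' _ hxz).elim, (ha' _ (h ▸ hxy)).elim, hs.1 hxy hxz]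
  · simp only [Set.mem_insert_iff, Prod.mk.injEq] at hxz hyz
    rcases hxz with ⟨rfl, rfl⟩ | hxz <;> rcases hyz with ⟨rfl, h⟩ | hyz
    exacts [rfl, (hb' _ hyz).elim, (hb' _ (h ▸ hxz)).elim, hs.2 hxz hyz]

def groupLetters (E : Set Word) : Set Perm' := {g | ∃ w ∈ E, Sum.inl g ∈ w}

lemma groupLetters_finite {E : Set Word} (hE : E.Finite) : (groupLetters E).Finite := by
  have : groupLetters E = ⋃ w ∈ E, Sum.inl ⁻¹' {l | l ∈ w} := by
    ext g; simp [groupLetters]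
  rw [this]
  exact hE.biUnion fun w _ => w.finite_toSet.preimage Sum.inl_injective.injOn

def badSet (X : Set ℕ) (GS : Set Perm') : Set ℕ :=
  X ∪ ⋃ g ∈ GS, (⇑g ⁻¹' X ∪ ⇑g⁻¹ ⁻¹' X ∪ Function.fixedPoints g)

lemma badSet_finite {X : Set ℕ} {GS : Set Perm'} (hX : X.Finite) (hGS : GS.Finite)
    (hfix : ∀ g ∈ GS, (Function.fixedPoints g).Finite) : (badSet X GS).Finite :=
  hX.union <| hGS.biUnion fun g hg =>
    ((hX.preimage g.injective.injOn).union (hX.preimage g⁻¹.injective.injOn)).union (hfix g hg)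

lemma subset_badSet (X : Set ℕ) (GS : Set Perm') : X ⊆ badSet X GS := Set.subset_union_left

lemma psupp_finite {s : Set (ℕ × ℕ)} (hs : s.Finite) : (psupp s).Finite :=
  (hs.image _).union (hs.image _)

lemma isolated_of_not_mem_badSet {s : Set (ℕ × ℕ)} {GS : Set Perm'} {n m p k : ℕ}
    (hnm : n = p ∧ m = k ∨ n = k ∧ m = p) (hp : p ∉ badSet (insert k (psupp s)) GS) :
    p ∉ pdom (insert (n, m) s) ∩ pran (insert (n, m) s) ∧
      ∀ g ∈ GS, g p ∉ psupp (insert (n, m) s) ∧ g⁻¹ p ∉ psupp (insert (n, m) s) := by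
  simp only [badSet, psupp, pdom, pran, Set.image_insert_eq, Set.mem_union, Set.mem_insert_iff,
    Set.mem_iUnion, Set.mem_preimage, Function.mem_fixedPoints, Function.IsFixedPt,
    Set.mem_inter_iff, not_or, not_exists] at hp ⊢
  obtain ⟨⟨hpk, hpd, hpr⟩, hg⟩ := hp
  refine ⟨by rintro ⟨hd | hd, hr | hr⟩ <;> grind, fun g hgGS => ?_⟩
  obtain ⟨⟨⟨hgk, hgd, hgr⟩, hgk', hgd', hgr'⟩, hgp⟩ := hg g hgGS
  have hgp' : g⁻¹ p ≠ p := fun h => hgp (Equiv.Perm.inv_eq_iff_eq.1 h).symm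
  grind

lemma ZdagCond.extend_insert {G : Subgroup Perm'} {r : ℕ → Fin 2} {s : Set (ℕ × ℕ)}
    {E : Set Word} (hc : ZdagCond G r s E) {n m p k : ℕ} (hn : n ∉ pdom s) (hm : m ∉ pran s)
    (hnm : n = p ∧ m = k ∨ n = k ∧ m = p)
    (hp : p ∉ badSet (insert k (psupp s)) (groupLetters E)) :
    ZdagCond G r (insert (n, m) s) E ∧ ZLe (insert (n, m) s) E s E := by
  obtain ⟨⟨hsfin, hsinj, -, hEnice⟩, -⟩ := id hc
  obtain ⟨hpt, hg⟩ := isolated_of_not_mem_badSet hnm hp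
  refine hc.extend_of_wordFix_eq (Set.subset_insert _ _) (hsfin.insert _) (hsinj.insert hn hm)
    fun w hw => ?_
  exact (hEnice w hw).wordFix_insert_eq (by omega) hpt fun g hgw => hg g ⟨w, hw, hgw⟩

/-- Domain and range extension for the coding forcing `Z†_G(r)`. -/
theorem statement14 (G : Subgroup Perm') (hG : Cofinitary G) (r : ℕ → Fin 2)
    (s : Set (ℕ × ℕ)) (E : Set Word) (hc : ZdagCond G r s E) :
    (∀ n : ℕ, n ∉ pdom s →
      {m : ℕ | ¬ (ZdagCond G r (insert (n, m) s) E ∧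
        ZLe (insert (n, m) s) E s E)}.Finite) ∧
    (∀ m : ℕ, m ∉ pran s →
      {n : ℕ | ¬ (ZdagCond G r (insert (n, m) s) E ∧
        ZLe (insert (n, m) s) E s E)}.Finite) := by
  obtain ⟨⟨hsfin, -, hEfin, hEnice⟩, -⟩ := id hc
  have hB : ∀ k, (badSet (insert k (psupp s)) (groupLetters E)).Finite := fun k =>
    badSet_finite ((psupp_finite hsfin).insert k) (groupLetters_finite hEfin)
      fun g ⟨w, hw, hgw⟩ => ((hEnice w hw).mem_of_inl_mem hgw).elim (hG g)
  refine ⟨fun n hn => (hB n).subset fun m hm => ?_, fun m hm => (hB m).subset fun n hn => ?_⟩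
  · by_contra hmB
    have hmr : m ∉ pran s := fun h => hmB (subset_badSet _ _ (Or.inr (Or.inr h)))
    exact hm (hc.extend_insert hn hmr (Or.inr ⟨rfl, rfl⟩) hmB)
  · by_contra hnB
    have hnd : n ∉ pdom s := fun h => hnB (subset_badSet _ _ (Or.inr (Or.inl h)))
    exact hn (hc.extend_insert hnd hm (Or.inl ⟨rfl, rfl⟩) hnB)

end
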